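/- Let k be a field, n a positive natural number, and R = k[[X_0,…,X_{n−1}]] the ring of formal power series in n variables over k. Let a, b : Fin n → ℕ and let P be a prime ideal of R. Then the extension of the ideal (X^a, X^b) to the localization R_P fails to be principal if and only if there exist indices i and j with a_i > b_i, b_j > a_j, X_i ∈ P and X_j ∈ P. -/

import Mathlib

/-!
Both generators are monomials, so the extended ideal is principal exactly when one of
`X^a`, `X^b` divides the other in the local ring `R_P`. After clearing a denominator `s ∉ P`,
`X^a ∣ X^b` in `R_P` means `X^a ∣ X^b * s` in `R`; comparing `X_i`-adic orders, this forces
`a_i ≤ b_i` whenever `X_i ∈ P` (then `X_i ∤ s`). Conversely `X^a ∣ X^b * ∏ X_i^(a_i - b_i)`,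
and that cofactor becomes a unit in `R_P` once every `X_i` with `b_i < a_i` lies outside `P`.
-/

open MvPowerSeries

theorem Ideal.span_pair_isPrincipal_iff {R : Type*} [CommRing R] [IsLocalRing R] {x y : R} :
    (Ideal.span {x, y}).IsPrincipal ↔ x ∣ y ∨ y ∣ x := by
  constructor
  · rintro ⟨w, hw⟩
    rw [submodule_span_eq] at hw
    have hx : x ∈ span {w} := by rw [← hw]; exact subset_span (by simp)
    have hy : y ∈ span {w} := by rw [← hw]; exact subset_span (by simp)
    have hw' : w ∈ span {x, y} := by rw [hw]; exact mem_span_singleton_self w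
    obtain ⟨p, rfl⟩ := mem_span_singleton'.mp hx
    obtain ⟨q, rfl⟩ := mem_span_singleton'.mp hy
    obtain ⟨r, s, hrs⟩ := mem_span_pair.mp hw'
    -- `w = (r p + s q) w`: either `r p + s q` is a unit, hence so is `p` or `q`, or `w = 0`.
    rcases IsLocalRing.isUnit_or_isUnit_one_sub_self (r * p + s * q) with hu | hu
    · rcases IsLocalRing.isUnit_or_isUnit_of_isUnit_add hu with hp | hq
      · exact .inl <| (isUnit_of_mul_isUnit_right hp).mul_left_dvd.mpr (dvd_mul_left w q)
      · exact .inr <| (isUnit_of_mul_isUnit_right hq).mul_left_dvd.mpr (dvd_mul_left w p)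
    · have hw0 : w = 0 := hu.mul_right_eq_zero.mp (by linear_combination -hrs)
      simp [hw0]
  · rintro (h | h)
    · rw [Set.pair_comm, span_insert, sup_eq_right.mpr (span_singleton_le_span_singleton.mpr h)]
      exact ⟨x, rfl⟩
    · rw [span_insert, sup_eq_right.mpr (span_singleton_le_span_singleton.mpr h)]
      exact ⟨y, rfl⟩

theorem IsLocalization.exists_dvd_mul_of_algebraMap_dvd {R S : Type*} [CommRing R] [CommRing S]
    [Algebra R S] {M : Submonoid R} [IsLocalization M S] {x y : R}
    (h : algebraMap R S x ∣ algebraMap R S y) : ∃ m : M, x ∣ y * m := by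
  obtain ⟨z, hz⟩ := h
  obtain ⟨⟨f, t⟩, hft⟩ := surj M z
  obtain ⟨c, hc⟩ := exists_of_eq (M := M) (S := S) (x := y * t) (y := x * f) <| by
    rw [map_mul, map_mul, hz, mul_assoc, hft]
  exact ⟨t * c, c * f, by push_cast; linear_combination hc⟩

theorem Ideal.prod_pow_mem_primeCompl {R ι : Type*} [CommSemiring R] {P : Ideal R} [P.IsPrime]
    {s : Finset ι} {f : ι → R} {e : ι → ℕ} (h : ∀ i ∈ s, e i ≠ 0 → f i ∉ P) :
    ∏ i ∈ s, f i ^ e i ∈ P.primeCompl := by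
  refine P.primeCompl.prod_mem fun i hi => ?_
  rcases eq_or_ne (e i) 0 with h0 | h0
  · rw [h0, pow_zero]
    exact one_mem _
  · exact pow_mem (h i hi h0) _

namespace MvPowerSeries

variable {σ R : Type*}

theorem prod_X_pow_eq_monomial [CommSemiring R] [Fintype σ] (a : σ → ℕ) :
    ∏ i, (X i : MvPowerSeries σ R) ^ a i = monomial (Finsupp.equivFunOnFinite.symm a) 1 := by
  rw [monomial_one_eq, Finsupp.prod_fintype _ _ fun _ => pow_zero _]
  rfl

theorem le_of_X_pow_dvd_monomial_mul [CommSemiring R] {i : σ} {m : ℕ} {e : σ →₀ ℕ}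
    {s : MvPowerSeries σ R} (hs : ¬ X i ∣ s) (h : X i ^ m ∣ monomial e 1 * s) : m ≤ e i := by
  obtain ⟨d, hdi, hd⟩ : ∃ d : σ →₀ ℕ, d i = 0 ∧ coeff d s ≠ 0 := by
    simpa [X_dvd_iff] using hs
  by_contra! hlt
  refine hd ?_
  simpa [coeff_add_monomial_mul] using X_pow_dvd_iff.mp h (e + d) (by simpa [hdi] using hlt)

theorem algebraMap_prod_X_pow_dvd_iff [CommRing R] [Fintype σ]
    (P : Ideal (MvPowerSeries σ R)) [P.IsPrime] (a b : σ → ℕ) :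
    algebraMap (MvPowerSeries σ R) (Localization.AtPrime P) (∏ i, X i ^ a i) ∣
        algebraMap (MvPowerSeries σ R) (Localization.AtPrime P) (∏ i, X i ^ b i) ↔
      ∀ i, b i < a i → X i ∉ P := by
  constructor
  · intro h i hi hXi
    obtain ⟨⟨s, hs⟩, hdvd⟩ :=
      IsLocalization.exists_dvd_mul_of_algebraMap_dvd (M := P.primeCompl) h
    have hXs : ¬ X i ∣ s := fun ⟨t, ht⟩ => hs (ht ▸ P.mul_mem_right t hXi)
    rw [prod_X_pow_eq_monomial b] at hdvd
    have hXa : X i ^ a i ∣ ∏ j, (X j : MvPowerSeries σ R) ^ a j :=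
      Finset.dvd_prod_of_mem _ (Finset.mem_univ i)
    have hle : a i ≤ b i := by
      simpa using le_of_X_pow_dvd_monomial_mul hXs (hXa.trans hdvd)
    omega
  · intro h
    have hunit : IsUnit (algebraMap _ (Localization.AtPrime P) (∏ i, X i ^ (a i - b i))) :=
      IsLocalization.map_units _ (⟨_, Ideal.prod_pow_mem_primeCompl fun i _ hi =>
        h i (Nat.lt_of_sub_ne_zero hi)⟩ : P.primeCompl)
    rw [← hunit.dvd_mul_right, ← map_mul, ← Finset.prod_mul_distrib]
    refine map_dvd _ (Finset.prod_dvd_prod_of_dvd _ _ fun i _ => ?_)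
    rw [← pow_add]
    exact pow_dvd_pow _ (by omega)

end MvPowerSeries

theorem stmt_8_general (k : Type*) [Field k] (n : ℕ) (a b : Fin n → ℕ)
    (P : Ideal (MvPowerSeries (Fin n) k)) (hP : P.IsPrime) :
    ¬ ((Ideal.span {∏ i, (MvPowerSeries.X i : MvPowerSeries (Fin n) k) ^ a i,
          ∏ i, (MvPowerSeries.X i : MvPowerSeries (Fin n) k) ^ b i}).map
        (algebraMap (MvPowerSeries (Fin n) k) (Localization.AtPrime P))).IsPrincipal ↔
      ∃ i j, b i < a i ∧ a j < b j ∧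
        (MvPowerSeries.X i : MvPowerSeries (Fin n) k) ∈ P ∧
        (MvPowerSeries.X j : MvPowerSeries (Fin n) k) ∈ P := by
  rw [Ideal.map_span, Set.image_pair, Ideal.span_pair_isPrincipal_iff,
    MvPowerSeries.algebraMap_prod_X_pow_dvd_iff,
    MvPowerSeries.algebraMap_prod_X_pow_dvd_iff]
  push Not
  constructor
  · rintro ⟨⟨i, hi, hXi⟩, ⟨j, hj, hXj⟩⟩
    exact ⟨i, j, hi, hj, hXi, hXj⟩
  · rintro ⟨i, j, hi, hj, hXi, hXj⟩
    exact ⟨⟨i, hi, hXi⟩, ⟨j, hj, hXj⟩⟩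

/-- In `R = k[[X_0, …, X_{n-1}]]` over a field `k`, for a prime ideal `P` of `R`,
the extension of `(X^a, X^b)` to the localization `R_P` fails to be principal if
and only if there exist indices `i`, `j` with `a i > b i`, `b j > a j`,
`X i ∈ P` and `X j ∈ P`. -/
theorem stmt_8 (k : Type*) [Field k] (n : ℕ) (hn : 0 < n) (a b : Fin n → ℕ)
    (P : Ideal (MvPowerSeries (Fin n) k)) (hP : P.IsPrime) :
    ¬ ((Ideal.span {∏ i, (MvPowerSeries.X i : MvPowerSeries (Fin n) k) ^ a i,
          ∏ i, (MvPowerSeries.X i : MvPowerSeries (Fin n) k) ^ b i}).map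
        (algebraMap (MvPowerSeries (Fin n) k) (Localization.AtPrime P))).IsPrincipal ↔
      ∃ i j, b i < a i ∧ a j < b j ∧
        (MvPowerSeries.X i : MvPowerSeries (Fin n) k) ∈ P ∧
        (MvPowerSeries.X j : MvPowerSeries (Fin n) k) ∈ P :=
  stmt_8_general k n a b P hP
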